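/- For every u > 0 and every real λ < Λ, limsup_{δ→0} limsup_{t→∞} (1/t)·log P(|S_t − u| ≤ δ) ≤ −( λu − r·E[e^{λξ_1} − 1] ); consequently limsup_{δ→0} limsup_{t→∞} (1/t)·log P(|S_t − u| ≤ δ) ≤ −sup_{λ < Λ}( λu − r·E[e^{λξ_1} − 1] ). -/

import Mathlib

/-!
Fix `λ` with `M = E[exp (λ ξ₁)] < ∞` and `c > r (M - 1)`, and put `ρ = r / (r + c)`, so that
`q = M ρ < 1`. By independence `E[exp (λ (ξ₁ + ⋯ + ξ_N) - c τ_N)] = q ^ N`, hence the weight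
`Σ_N exp (λ (ξ₁ + ⋯ + ξ_N)) (exp (-c τ_N) + exp (-c τ_{N+1}))` has mean `(1 + ρ) / (1 - q)`.
If `N` is the number of arrivals up to time `t`, then `τ_N ≤ t < τ_{N+1}` and
`t S_t = ξ₁ + ⋯ + ξ_N`, so on `{|S_t - u| ≤ δ}` the weight is at least
`exp (t (λ u - |λ| δ - c))`. Markov's inequality gives
`(1/t) log P(|S_t - u| ≤ δ) ≤ -(λ u - |λ| δ) + c + O(1/t)`; let `t → ∞`, `δ → 0`, `c ↓ r (M - 1)`.
-/

open MeasureTheory ProbabilityTheory Filter Real Set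

open scoped ENNReal Topology

section ExponentialDistribution

variable {r t : ℝ}

lemma exponentialPDF_mul_exp_mul (hr : 0 < r) (ht : t < r) (x : ℝ) :
    exponentialPDF r x * ENNReal.ofReal (exp (t * x)) =
      ENNReal.ofReal (r / (r - t)) * exponentialPDF (r - t) x := by
  have hrt : 0 < r - t := sub_pos.2 ht
  rcases lt_or_ge x 0 with hx | hx
  · simp [exponentialPDF_of_neg hx]
  rw [exponentialPDF_of_nonneg hx, exponentialPDF_of_nonneg hx,
    ← ENNReal.ofReal_mul (by positivity), ← ENNReal.ofReal_mul (by positivity), mul_assoc,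
    ← exp_add, show -(r * x) + t * x = -((r - t) * x) by ring]
  field_simp

lemma lintegral_exp_mul_expMeasure (hr : 0 < r) (ht : t < r) :
    ∫⁻ x, ENNReal.ofReal (exp (t * x)) ∂expMeasure r = ENNReal.ofReal (r / (r - t)) := by
  change ∫⁻ x, _ ∂volume.withDensity (exponentialPDF r) = _
  have hpdf (s : ℝ) : Measurable (exponentialPDF s) :=
    (measurable_exponentialPDFReal s).ennreal_ofReal
  rw [lintegral_withDensity_eq_lintegral_mul _ (hpdf r) (by fun_prop)]
  simp only [Pi.mul_apply, exponentialPDF_mul_exp_mul hr ht]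
  rw [lintegral_const_mul _ (hpdf _),
    lintegral_exponentialPDF_eq_one (sub_pos.2 ht), mul_one]

lemma integrable_exp_mul_expMeasure (hr : 0 < r) (ht : t < r) :
    Integrable (fun x => exp (t * x)) (expMeasure r) := by
  refine ⟨by fun_prop, ?_⟩
  rw [hasFiniteIntegral_iff_ofReal (.of_forall fun x => (exp_pos _).le),
    lintegral_exp_mul_expMeasure hr ht]
  exact ENNReal.ofReal_lt_top

lemma mgf_id_expMeasure (hr : 0 < r) (ht : t < r) :
    mgf id (expMeasure r) t = r / (r - t) := by
  rw [mgf, integral_eq_lintegral_of_nonneg_ae (.of_forall fun x => (exp_pos _).le) (by fun_prop)]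
  simp only [id, lintegral_exp_mul_expMeasure hr ht]
  exact ENNReal.toReal_ofReal (div_nonneg hr.le (sub_pos.2 ht).le)

variable {Ω : Type*} [MeasurableSpace Ω] {P : Measure Ω} {X : Ω → ℝ}

lemma integrable_exp_mul_of_map_eq_expMeasure (hr : 0 < r) (hX : Measurable X)
    (hmap : P.map X = expMeasure r) (ht : t < r) : Integrable (fun ω => exp (t * X ω)) P := by
  have h := integrable_exp_mul_expMeasure hr ht
  rw [← hmap] at h
  exact (integrable_map_measure (by fun_prop) hX.aemeasurable).1 h

lemma mgf_eq_of_map_eq_expMeasure (hr : 0 < r) (hX : Measurable X)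
    (hmap : P.map X = expMeasure r) (ht : t < r) : mgf X P t = r / (r - t) := by
  rw [← mgf_id_map hX.aemeasurable, hmap, mgf_id_expMeasure hr ht]

lemma ae_nonneg_of_map_eq_expMeasure (hX : Measurable X) (hmap : P.map X = expMeasure r) :
    ∀ᵐ ω ∂P, 0 ≤ X ω := by
  have : ∀ᵐ x ∂expMeasure r, 0 ≤ x := by
    rw [ae_iff]
    simp only [not_le]
    change volume.withDensity (exponentialPDF r) (Iio 0) = 0
    rw [withDensity_apply _ measurableSet_Iio]
    exact lintegral_exponentialPDF_of_nonpos le_rfl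
  rw [← hmap] at this
  exact ae_of_ae_map hX.aemeasurable this

end ExponentialDistribution

namespace ProbabilityTheory.iIndepFun

variable {Ω ι κ : Type*} [MeasurableSpace Ω] {P : Measure Ω} {X : ι → Ω → ℝ} {Y : κ → Ω → ℝ}

lemma sum_elim_const_mul (h : iIndepFun (Sum.elim X Y) P) (a b : ℝ) :
    iIndepFun (Sum.elim (fun i ω => a * X i ω) (fun j ω => b * Y j ω)) P := by
  convert h.comp (fun k => Sum.elim (fun _ x => a * x) (fun _ x => b * x) k)
    (fun k => by cases k <;> exact measurable_const_mul _) with k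
  cases k <;> rfl

variable (h : iIndepFun (Sum.elim X Y) P) (hX : ∀ i, Measurable (X i))
  (hY : ∀ j, Measurable (Y j)) {a b : ℝ} {s : Finset ι} {t : Finset κ}
include h hX hY

lemma integrable_exp_mul_sum_add_mul_sum
    (hXs : ∀ i ∈ s, Integrable (fun ω => exp (a * X i ω)) P)
    (hYt : ∀ j ∈ t, Integrable (fun ω => exp (b * Y j ω)) P) :
    Integrable (fun ω => exp (a * ∑ i ∈ s, X i ω + b * ∑ j ∈ t, Y j ω)) P := by
  have := h.isProbabilityMeasure
  have hZ := (h.sum_elim_const_mul a b).integrable_exp_mul_sum (t := 1) (s := s.disjSum t)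
    (fun k => by cases k; exacts [(hX _).const_mul a, (hY _).const_mul b])
    (fun k hk => by
      cases k with
      | inl i => simpa using hXs i (Finset.inl_mem_disjSum.1 hk)
      | inr j => simpa using hYt j (Finset.inr_mem_disjSum.1 hk))
  simpa [Finset.sum_disjSum, Finset.mul_sum] using hZ

lemma integral_exp_mul_sum_add_mul_sum :
    ∫ ω, exp (a * ∑ i ∈ s, X i ω + b * ∑ j ∈ t, Y j ω) ∂P =
      (∏ i ∈ s, mgf (X i) P a) * ∏ j ∈ t, mgf (Y j) P b := by
  have hZ := (h.sum_elim_const_mul a b).mgf_sum (t := 1)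
    (fun k => by cases k; exacts [(hX _).const_mul a, (hY _).const_mul b]) (s.disjSum t)
  simpa [mgf, Finset.sum_disjSum, Finset.prod_disjSum, Finset.mul_sum] using hZ

end ProbabilityTheory.iIndepFun

lemma exists_lt_succ_and_le_iff_of_monotone {τ : ℕ → ℝ} (hτ : Monotone τ) {t : ℝ}
    (h0 : τ 0 ≤ t) (h : ∃ n, t < τ n) : ∃ N, t < τ (N + 1) ∧ ∀ n, τ n ≤ t ↔ n ≤ N := by
  classical
  have hm : Nat.find h ≠ 0 := fun h' => (Nat.find_spec h).not_ge (h' ▸ h0)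
  refine ⟨Nat.find h - 1, ?_, fun n => ⟨fun hn => ?_, fun hn => not_lt.1 (Nat.find_min h ?_)⟩⟩
  · rw [Nat.sub_add_cancel (Nat.one_le_iff_ne_zero.2 hm)]
    exact Nat.find_spec h
  · by_contra! hlt
    exact (Nat.find_spec h).not_ge ((hτ (by omega)).trans hn)
  · omega

lemma tsum_ite_le_eq_sum_Icc {τ x : ℕ → ℝ} {t : ℝ} {N : ℕ} (hN : ∀ n, τ n ≤ t ↔ n ≤ N) :
    ∑' n, (if 1 ≤ n ∧ τ n ≤ t then x n else 0) = ∑ n ∈ Finset.Icc 1 N, x n := by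
  rw [tsum_eq_sum (s := Finset.Icc 1 N) fun n hn => if_neg (by simpa [hN] using hn)]
  exact Finset.sum_congr rfl fun n hn => if_pos (by simpa [hN] using hn)

lemma exp_neg_mul_le_add_of_mem_Icc {a b t : ℝ} (c : ℝ) (hat : a ≤ t) (htb : t ≤ b) :
    exp (-(c * t)) ≤ exp (-(c * a)) + exp (-(c * b)) := by
  rcases le_total 0 c with hc | hc
  · exact le_add_of_le_of_nonneg (exp_le_exp.2 (by nlinarith)) (exp_pos _).le
  · exact le_add_of_nonneg_of_le (exp_pos _).le (exp_le_exp.2 (by nlinarith))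

lemma mul_sub_abs_mul_le_mul {s u δ : ℝ} (l : ℝ) (h : |s - u| ≤ δ) : l * u - |l| * δ ≤ l * s := by
  have : |l * s - l * u| ≤ |l| * δ := by
    rw [← mul_sub, abs_mul]
    exact mul_le_mul_of_nonneg_left h (abs_nonneg l)
  linarith [(abs_le.1 this).1]

lemma limsup_le_coe_of_eventually_le_of_tendsto {α : Type*} {l : Filter α} [l.NeBot]
    {f : α → EReal} {g : α → ℝ} {x : ℝ} (h : ∀ᶠ a in l, f a ≤ g a) (hg : Tendsto g l (𝓝 x)) :
    limsup f l ≤ x :=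
  (limsup_le_limsup h).trans (EReal.tendsto_coe.2 hg).limsup_eq.le

lemma limsup_inv_mul_log_le {f : ℝ → ℝ≥0∞} {K b : ℝ} (hK : 0 < K)
    (hf : ∀ᶠ t in atTop, f t ≤ ENNReal.ofReal (K * exp (b * t))) :
    limsup (fun t => ((1 / t : ℝ) : EReal) * ENNReal.log (f t)) atTop ≤ b := by
  refine limsup_le_coe_of_eventually_le_of_tendsto (g := fun t => b + log K / t) ?_ ?_
  · filter_upwards [hf, eventually_gt_atTop 0] with t hft ht
    have hlog : ENNReal.log (f t) ≤ ((log K + b * t : ℝ) : EReal) := by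
      refine (ENNReal.log_monotone hft).trans_eq ?_
      rw [ENNReal.log_ofReal_of_pos (by positivity), log_mul hK.ne' (exp_pos _).ne', log_exp]
    calc ((1 / t : ℝ) : EReal) * ENNReal.log (f t)
        ≤ ((1 / t : ℝ) : EReal) * ((log K + b * t : ℝ) : EReal) :=
          mul_le_mul_of_nonneg_left hlog (EReal.coe_nonneg.2 (by positivity))
      _ = ((b + log K / t : ℝ) : EReal) := by
          rw [← EReal.coe_mul]
          congr 1
          field_simp
          ring
  · have : Tendsto (fun t : ℝ => log K / t) atTop (𝓝 0) :=
      tendsto_const_nhds.div_atTop tendsto_id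
    simpa using this.const_add b

section CompoundPoisson

variable {Ω : Type*} {ξ σ : ℕ → Ω → ℝ}

def arrivalTime (σ : ℕ → Ω → ℝ) (n : ℕ) (ω : Ω) : ℝ := ∑ i ∈ Finset.Icc 1 n, σ i ω

noncomputable def compoundPoisson (ξ σ : ℕ → Ω → ℝ) (t : ℝ) (ω : Ω) : ℝ :=
  ∑' n, if 1 ≤ n ∧ arrivalTime σ n ω ≤ t then ξ n ω else 0

lemma arrivalTime_eq_sum (n : ℕ) : arrivalTime σ n = ∑ i ∈ Finset.Icc 1 n, σ i := by
  ext ω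
  simp [arrivalTime]

lemma monotone_arrivalTime {ω : Ω} (hσ : ∀ i, 1 ≤ i → 0 ≤ σ i ω) :
    Monotone fun n => arrivalTime σ n ω :=
  monotone_nat_of_le_succ fun n => by
    simp only [arrivalTime, Finset.sum_Icc_succ_top (Nat.le_add_left 1 n)]
    exact le_add_of_nonneg_right (hσ _ (Nat.le_add_left 1 n))

-- Both `τ_N` and `τ_{N+1}` occur so that `exp (-c t)` is dominated whatever the sign of `c`.
noncomputable def chernoffWeight (ξ σ : ℕ → Ω → ℝ) (l c : ℝ) (ω : Ω) : ℝ≥0∞ :=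
  ∑' N, (ENNReal.ofReal (exp (l * ∑ i ∈ Finset.Icc 1 N, ξ i ω - c * arrivalTime σ N ω)) +
    ENNReal.ofReal (exp (l * ∑ i ∈ Finset.Icc 1 N, ξ i ω - c * arrivalTime σ (N + 1) ω)))

lemma ofReal_exp_le_chernoffWeight {ω : Ω} (hσ : ∀ i, 1 ≤ i → 0 ≤ σ i ω) {t : ℝ} (ht : 0 ≤ t)
    (hescape : ∃ n, t < arrivalTime σ n ω) (l c : ℝ) :
    ENNReal.ofReal (exp (l * compoundPoisson ξ σ t ω - c * t)) ≤ chernoffWeight ξ σ l c ω := by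
  obtain ⟨N, hN1, hN⟩ := exists_lt_succ_and_le_iff_of_monotone (monotone_arrivalTime hσ)
    (by simpa [arrivalTime] using ht) hescape
  have hsum : compoundPoisson ξ σ t ω = ∑ i ∈ Finset.Icc 1 N, ξ i ω := tsum_ite_le_eq_sum_Icc hN
  refine le_trans ?_ (ENNReal.le_tsum N)
  rw [← ENNReal.ofReal_add (exp_pos _).le (exp_pos _).le]
  refine ENNReal.ofReal_le_ofReal ?_
  simp only [sub_eq_add_neg, exp_add, hsum, ← mul_add]
  exact mul_le_mul_of_nonneg_left
    (exp_neg_mul_le_add_of_mem_Icc c ((hN N).2 le_rfl) hN1.le) (exp_pos _).le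

variable [MeasurableSpace Ω] {P : Measure Ω} {r : ℝ}

lemma measurable_arrivalTime (hσ : ∀ i, Measurable (σ i)) (n : ℕ) :
    Measurable (arrivalTime σ n) :=
  Finset.measurable_fun_sum _ fun i _ => hσ i

lemma measurable_chernoffWeight (hξ : ∀ i, Measurable (ξ i)) (hσ : ∀ i, Measurable (σ i))
    (l c : ℝ) : Measurable (chernoffWeight ξ σ l c) := by
  have := measurable_arrivalTime hσ
  unfold chernoffWeight
  fun_prop

section Interarrival

variable (hr : 0 < r) (hσ : iIndepFun σ P) (hσmeas : ∀ i, Measurable (σ i))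
  (hσexp : ∀ i, 1 ≤ i → P.map (σ i) = expMeasure r)
include hr hσ hσmeas hσexp

lemma integrable_exp_mul_arrivalTime {t : ℝ} (ht : t < r) (n : ℕ) :
    Integrable (fun ω => exp (t * arrivalTime σ n ω)) P := by
  have := hσ.isProbabilityMeasure
  simpa [arrivalTime_eq_sum] using hσ.integrable_exp_mul_sum hσmeas fun i hi =>
    integrable_exp_mul_of_map_eq_expMeasure hr (hσmeas i) (hσexp i (Finset.mem_Icc.1 hi).1) ht

lemma mgf_arrivalTime {t : ℝ} (ht : t < r) (n : ℕ) :
    mgf (arrivalTime σ n) P t = (r / (r - t)) ^ n := by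
  rw [arrivalTime_eq_sum, hσ.mgf_sum hσmeas, Finset.prod_eq_pow_card (b := r / (r - t)),
    Nat.card_Icc, Nat.add_sub_cancel]
  exact fun i hi => mgf_eq_of_map_eq_expMeasure hr (hσmeas i) (hσexp i (Finset.mem_Icc.1 hi).1) ht

lemma ae_exists_lt_arrivalTime (t : ℝ) :
    ∀ᵐ ω ∂P, ∃ n, t < arrivalTime σ n ω := by
  have := hσ.isProbabilityMeasure
  set ρ := r / (r + 1)
  have hbound (n : ℕ) : P.real {ω | ∀ n, arrivalTime σ n ω ≤ t} ≤ exp t * ρ ^ n := by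
    calc P.real {ω | ∀ n, arrivalTime σ n ω ≤ t}
        ≤ P.real {ω | -t ≤ -arrivalTime σ n ω} :=
          measureReal_mono fun ω hω => neg_le_neg (hω n)
      _ ≤ exp (-1 * -t) * mgf (-arrivalTime σ n) P 1 := by
          refine measure_ge_le_exp_mul_mgf _ zero_le_one ?_
          simpa using integrable_exp_mul_arrivalTime hr hσ hσmeas hσexp (t := -1) (by linarith) n
      _ = exp t * ρ ^ n := by
          rw [mgf_neg, mgf_arrivalTime hr hσ hσmeas hσexp (by linarith)]
          simp [ρ]
  have hlim : Tendsto (fun n : ℕ => exp t * ρ ^ n) atTop (𝓝 0) := by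
    have hρ : ρ < 1 := (div_lt_one (by linarith)).2 (lt_add_one r)
    simpa using (tendsto_pow_atTop_nhds_zero_of_lt_one (by positivity) hρ).const_mul (exp t)
  have h0 : P.real {ω | ∀ n, arrivalTime σ n ω ≤ t} = 0 :=
    le_antisymm (ge_of_tendsto' hlim hbound) measureReal_nonneg
  rw [measureReal_eq_zero_iff] at h0
  simpa [ae_iff] using h0

end Interarrival

structure IsCompoundPoissonInput (P : Measure Ω) (ξ σ : ℕ → Ω → ℝ) (r : ℝ) : Prop where
  measurable_jump : ∀ i, Measurable (ξ i)
  measurable_interarrival : ∀ i, Measurable (σ i)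
  identDistrib_jump : ∀ i, 1 ≤ i → IdentDistrib (ξ i) (ξ 1) P P
  map_interarrival : ∀ i, 1 ≤ i → P.map (σ i) = expMeasure r
  iIndepFun : iIndepFun (Sum.elim ξ σ) P

namespace IsCompoundPoissonInput

variable (h : IsCompoundPoissonInput P ξ σ r) (hr : 0 < r) {l c : ℝ}
  (hint : Integrable (fun ω => exp (l * ξ 1 ω)) P)
include h hr hint

lemma lintegral_exp_mul_sum_sub_mul_arrivalTime (hrc : 0 < r + c) (a b : ℕ) :
    ∫⁻ ω, ENNReal.ofReal (exp (l * ∑ i ∈ Finset.Icc 1 a, ξ i ω - c * arrivalTime σ b ω)) ∂P =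
      ENNReal.ofReal (mgf (ξ 1) P l ^ a * (r / (r + c)) ^ b) := by
  have hmgf (i) (hi : i ∈ Finset.Icc 1 a) : mgf (ξ i) P l = mgf (ξ 1) P l :=
    mgf_congr_of_identDistrib _ _ (h.identDistrib_jump i (Finset.mem_Icc.1 hi).1) l
  have hσexp {j} (hj : j ∈ Finset.Icc 1 b) := h.map_interarrival j (Finset.mem_Icc.1 hj).1
  have hrc' : -c < r := by linarith
  have heq : (fun ω => exp (l * ∑ i ∈ Finset.Icc 1 a, ξ i ω - c * arrivalTime σ b ω)) =
      fun ω => exp (l * ∑ i ∈ Finset.Icc 1 a, ξ i ω + -c * ∑ j ∈ Finset.Icc 1 b, σ j ω) := by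
    simp [arrivalTime, sub_eq_add_neg]
  have hξint (i) (hi : i ∈ Finset.Icc 1 a) : Integrable (fun ω => exp (l * ξ i ω)) P :=
    ((h.identDistrib_jump i (Finset.mem_Icc.1 hi).1).comp
      (measurable_const_mul l).exp).integrable_iff.2 hint
  rw [← ofReal_integral_eq_lintegral_ofReal, heq,
    h.iIndepFun.integral_exp_mul_sum_add_mul_sum h.measurable_jump h.measurable_interarrival,
    Finset.prod_congr rfl hmgf, Finset.prod_congr rfl fun j hj =>
      mgf_eq_of_map_eq_expMeasure hr (h.measurable_interarrival j) (hσexp hj) hrc']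
  · simp [sub_neg_eq_add, div_pow]
  · rw [heq]
    exact h.iIndepFun.integrable_exp_mul_sum_add_mul_sum h.measurable_jump
      h.measurable_interarrival hξint fun j hj =>
        integrable_exp_mul_of_map_eq_expMeasure hr (h.measurable_interarrival j) (hσexp hj) hrc'
  · exact .of_forall fun ω => (exp_pos _).le

lemma lintegral_chernoffWeight (hrc : 0 < r + c) (hq : mgf (ξ 1) P l * (r / (r + c)) < 1) :
    ∫⁻ ω, chernoffWeight ξ σ l c ω ∂P =
      ENNReal.ofReal ((1 + r / (r + c)) / (1 - mgf (ξ 1) P l * (r / (r + c)))) := by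
  set ρ := r / (r + c)
  set q := mgf (ξ 1) P l * ρ
  have hρ : 0 ≤ ρ := by positivity
  have hq0 : 0 ≤ q := mul_nonneg mgf_nonneg hρ
  have hmeas (a b : ℕ) : Measurable fun ω =>
      ENNReal.ofReal (exp (l * ∑ i ∈ Finset.Icc 1 a, ξ i ω - c * arrivalTime σ b ω)) := by
    have := h.measurable_jump
    have := measurable_arrivalTime h.measurable_interarrival b
    fun_prop
  have hterm (N : ℕ) : ∫⁻ ω, (ENNReal.ofReal (exp (l * ∑ i ∈ Finset.Icc 1 N, ξ i ω -
      c * arrivalTime σ N ω)) + ENNReal.ofReal (exp (l * ∑ i ∈ Finset.Icc 1 N, ξ i ω -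
      c * arrivalTime σ (N + 1) ω))) ∂P =
        ENNReal.ofReal q ^ N + ENNReal.ofReal ρ * ENNReal.ofReal q ^ N := by
    rw [lintegral_add_left (hmeas N N), h.lintegral_exp_mul_sum_sub_mul_arrivalTime hr hint hrc,
      h.lintegral_exp_mul_sum_sub_mul_arrivalTime hr hint hrc, ← ENNReal.ofReal_pow hq0,
      ← ENNReal.ofReal_mul hρ]
    congr 2 <;> simp only [q, mul_pow, pow_succ] <;> ring
  unfold chernoffWeight
  rw [lintegral_tsum fun N => ((hmeas N N).fun_add (hmeas N (N + 1))).aemeasurable,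
    tsum_congr hterm, ENNReal.tsum_add, ENNReal.tsum_mul_left, ENNReal.tsum_geometric,
    ← one_add_mul, ← ENNReal.ofReal_one, ← ENNReal.ofReal_sub _ hq0,
    ← ENNReal.ofReal_inv_of_pos (by linarith), ← ENNReal.ofReal_add zero_le_one hρ,
    ← ENNReal.ofReal_mul (by positivity), div_eq_mul_inv]

lemma exists_measure_le_mul_compoundPoisson_le (hc : r * (mgf (ξ 1) P l - 1) < c) :
    ∃ K, 0 < K ∧ ∀ t, 0 ≤ t → ∀ a, P {ω | a ≤ l * compoundPoisson ξ σ t ω} ≤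
      ENNReal.ofReal (K * exp (c * t - a)) := by
  have := h.iIndepFun.isProbabilityMeasure
  have hM : 0 < mgf (ξ 1) P l := mgf_pos hint
  have hrc : 0 < r + c := by nlinarith
  have hq : mgf (ξ 1) P l * (r / (r + c)) < 1 := by
    rw [← mul_div_assoc, div_lt_one hrc]; linarith
  refine ⟨(1 + r / (r + c)) / (1 - mgf (ξ 1) P l * (r / (r + c))),
    div_pos (by positivity) (sub_pos.2 hq), fun t ht a => ?_⟩
  have hnonneg : ∀ᵐ ω ∂P, ∀ i, 1 ≤ i → 0 ≤ σ i ω := ae_all_iff.2 fun i => by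
    by_cases hi : 1 ≤ i
    · filter_upwards [ae_nonneg_of_map_eq_expMeasure (h.measurable_interarrival i)
        (h.map_interarrival i hi)] with ω hω _ using hω
    · exact .of_forall fun _ hi' => absurd hi' hi
  have hescape := ae_exists_lt_arrivalTime hr (h.iIndepFun.precomp Sum.inr_injective)
    h.measurable_interarrival h.map_interarrival t
  have hsub : {ω | a ≤ l * compoundPoisson ξ σ t ω} ≤ᵐ[P]
      {ω | ENNReal.ofReal (exp (a - c * t)) ≤ chernoffWeight ξ σ l c ω} := by
    filter_upwards [hnonneg, hescape] with ω hσ hesc (ha : a ≤ l * compoundPoisson ξ σ t ω)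
    exact (ENNReal.ofReal_le_ofReal (exp_le_exp.2 (by linarith))).trans
      (ofReal_exp_le_chernoffWeight hσ ht hesc l c)
  calc P {ω | a ≤ l * compoundPoisson ξ σ t ω}
      ≤ P {ω | ENNReal.ofReal (exp (a - c * t)) ≤ chernoffWeight ξ σ l c ω} :=
        measure_mono_ae hsub
    _ ≤ (∫⁻ ω, chernoffWeight ξ σ l c ω ∂P) / ENNReal.ofReal (exp (a - c * t)) :=
      meas_ge_le_lintegral_div
        (measurable_chernoffWeight h.measurable_jump h.measurable_interarrival l c).aemeasurable
        (ENNReal.ofReal_pos.2 (exp_pos _)).ne' ENNReal.ofReal_ne_top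
    _ = _ := by
      rw [h.lintegral_chernoffWeight hr hint hrc hq, ← ENNReal.ofReal_div_of_pos (exp_pos _),
        div_eq_mul_inv _ (exp _), ← exp_neg, neg_sub]

lemma limsup_limsup_log_measure_le_of_lt (hc : r * (mgf (ξ 1) P l - 1) < c) (u : ℝ) :
    limsup (fun δ => limsup (fun t => ((1 / t : ℝ) : EReal) *
      ENNReal.log (P {ω | |1 / t * compoundPoisson ξ σ t ω - u| ≤ δ})) atTop) (𝓝[>] 0) ≤
      ((-(l * u) + c : ℝ) : EReal) := by
  obtain ⟨K, hK, hbound⟩ := h.exists_measure_le_mul_compoundPoisson_le hr hint hc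
  refine limsup_le_coe_of_eventually_le_of_tendsto (g := fun δ => -(l * u - |l| * δ) + c)
    (.of_forall fun δ => limsup_inv_mul_log_le hK ?_) ?_
  · filter_upwards [eventually_gt_atTop 0] with t ht
    calc P {ω | |1 / t * compoundPoisson ξ σ t ω - u| ≤ δ}
        ≤ P {ω | t * (l * u - |l| * δ) ≤ l * compoundPoisson ξ σ t ω} := by
          refine measure_mono fun ω (hω : |_ - u| ≤ δ) => ?_
          have hs := mul_sub_abs_mul_le_mul l hω
          rw [show l * (1 / t * compoundPoisson ξ σ t ω) = l * compoundPoisson ξ σ t ω / t by ring,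
            le_div_iff₀ ht] at hs
          change t * (l * u - |l| * δ) ≤ l * compoundPoisson ξ σ t ω
          linarith
      _ ≤ ENNReal.ofReal (K * exp (c * t - t * (l * u - |l| * δ))) := hbound t ht.le _
      _ = ENNReal.ofReal (K * exp ((-(l * u - |l| * δ) + c) * t)) := by ring_nf
  · exact ((by fun_prop : Continuous fun δ : ℝ => -(l * u - |l| * δ) + c).tendsto' 0 _
      (by simp)).mono_left nhdsWithin_le_nhds

lemma limsup_limsup_log_measure_le (u : ℝ) :
    limsup (fun δ => limsup (fun t => ((1 / t : ℝ) : EReal) *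
      ENNReal.log (P {ω | |1 / t * compoundPoisson ξ σ t ω - u| ≤ δ})) atTop) (𝓝[>] 0) ≤
      ((-(l * u - r * (mgf (ξ 1) P l - 1)) : ℝ) : EReal) := by
  have hlim : Tendsto (fun c : ℝ => ((-(l * u) + c : ℝ) : EReal))
      (𝓝[>] (r * (mgf (ξ 1) P l - 1))) (𝓝 ((-(l * u - r * (mgf (ξ 1) P l - 1)) : ℝ) : EReal)) :=
    EReal.tendsto_coe.2 (((continuous_const_add _).tendsto' _ _ (by ring)).mono_left
      nhdsWithin_le_nhds)
  exact ge_of_tendsto hlim (eventually_nhdsWithin_of_forall fun c hc =>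
    h.limsup_limsup_log_measure_le_of_lt hr hint hc u)

end IsCompoundPoissonInput

end CompoundPoisson

theorem compoundPoisson_upper_bound_pos_general
    {Ω : Type*} [MeasurableSpace Ω] (P : Measure Ω) [IsProbabilityMeasure P]
    (ξ σ : ℕ → Ω → ℝ) (r : ℝ) (hr : 0 < r)
    (hξmeas : ∀ i, Measurable (ξ i))
    (hσmeas : ∀ i, Measurable (σ i))
    (hξident : ∀ i, 1 ≤ i → IdentDistrib (ξ i) (ξ 1) P P)
    (hσexp : ∀ i, 1 ≤ i → P.map (σ i) = ProbabilityTheory.expMeasure r)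
    (hindep : iIndepFun (Sum.elim ξ σ) P)
    (τ : ℕ → Ω → ℝ)
    (hτ : τ = fun (n : ℕ) (ω : Ω) => ∑ i ∈ Finset.Icc 1 n, σ i ω)
    (S : ℝ → Ω → ℝ)
    (hS : S = fun (t : ℝ) (ω : Ω) =>
      (1 / t) * ∑' n : ℕ, if 1 ≤ n ∧ τ n ω ≤ t then ξ n ω else 0)
    (Λ : EReal)
    (hfin : ∀ l : ℝ, (l : EReal) < Λ →
      Integrable (fun ω => Real.exp (l * ξ 1 ω)) P)
    (u : ℝ) (l : ℝ) (hl : (l : EReal) < Λ) :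
    Filter.limsup
      (fun δ : ℝ => Filter.limsup
        (fun t : ℝ => ((1 / t : ℝ) : EReal) *
          ENNReal.log (P {ω | |S t ω - u| ≤ δ})) atTop)
      (nhdsWithin 0 (Ioi 0)) ≤
      ((-(l * u - r * ∫ ω, (Real.exp (l * ξ 1 ω) - 1) ∂P) : ℝ) : EReal) ∧
    Filter.limsup
      (fun δ : ℝ => Filter.limsup
        (fun t : ℝ => ((1 / t : ℝ) : EReal) *
          ENNReal.log (P {ω | |S t ω - u| ≤ δ})) atTop)
      (nhdsWithin 0 (Ioi 0)) ≤
      -(⨆ (l' : ℝ) (_ : (l' : EReal) < Λ),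
        ((l' * u - r * ∫ ω, (Real.exp (l' * ξ 1 ω) - 1) ∂P : ℝ) : EReal)) := by
  subst hτ hS
  have h : IsCompoundPoissonInput P ξ σ r := ⟨hξmeas, hσmeas, hξident, hσexp, hindep⟩
  have hbound (l' : ℝ) (hl' : (l' : EReal) < Λ) :=
    h.limsup_limsup_log_measure_le hr (hfin l' hl') u
  have hmgf (l' : ℝ) (hl' : (l' : EReal) < Λ) :
      ∫ ω, (exp (l' * ξ 1 ω) - 1) ∂P = mgf (ξ 1) P l' - 1 := by
    simp [integral_sub (hfin l' hl') (integrable_const 1), mgf]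
  refine ⟨?_, EReal.le_neg_of_le_neg (iSup₂_le fun l' hl' => ?_)⟩
  · rw [hmgf l hl]
    exact hbound l hl
  · rw [hmgf l' hl']
    exact EReal.le_neg_of_le_neg ((hbound l' hl').trans_eq (EReal.coe_neg _))

/-- **Local LDP upper bound at `u > 0` for the compound Poisson family `(S t)`.**
For every `u > 0` and every `λ < Λ`,
`limsup_{δ → 0⁺} limsup_{t → ∞} (1/t) log P(|S t - u| ≤ δ) ≤ -(λ u - r E[exp (λ ξ₁) - 1])`;
consequently the iterated limsup is at most `-sup_{λ < Λ} (λ u - r E[exp (λ ξ₁) - 1])`. -/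
theorem compoundPoisson_upper_bound_pos
    {Ω : Type*} [MeasurableSpace Ω] (P : Measure Ω) [IsProbabilityMeasure P]
    (ξ σ : ℕ → Ω → ℝ) (r : ℝ) (hr : 0 < r)
    (hξmeas : ∀ i, Measurable (ξ i))
    (hσmeas : ∀ i, Measurable (σ i))
    (hξnonneg : ∀ i ω, 0 ≤ ξ i ω)
    (hξident : ∀ i, 1 ≤ i → IdentDistrib (ξ i) (ξ 1) P P)
    (hσexp : ∀ i, 1 ≤ i → P.map (σ i) = ProbabilityTheory.expMeasure r)
    (hindep : iIndepFun (Sum.elim ξ σ) P)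
    (τ : ℕ → Ω → ℝ)
    (hτ : τ = fun (n : ℕ) (ω : Ω) => ∑ i ∈ Finset.Icc 1 n, σ i ω)
    (S : ℝ → Ω → ℝ)
    (hS : S = fun (t : ℝ) (ω : Ω) =>
      (1 / t) * ∑' n : ℕ, if 1 ≤ n ∧ τ n ω ≤ t then ξ n ω else 0)
    (Λ : EReal)
    (hΛdef : Λ = sInf {x : EReal |
      ∃ l : ℝ, x = (l : EReal) ∧ 0 < l ∧
        ¬ Integrable (fun ω => Real.exp (l * ξ 1 ω)) P})
    (hΛpos : 0 < Λ)
    (hfin : ∀ l : ℝ, (l : EReal) < Λ →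
      Integrable (fun ω => Real.exp (l * ξ 1 ω)) P)
    (u : ℝ) (hu : 0 < u) (l : ℝ) (hl : (l : EReal) < Λ) :
    Filter.limsup
      (fun δ : ℝ => Filter.limsup
        (fun t : ℝ => ((1 / t : ℝ) : EReal) *
          ENNReal.log (P {ω | |S t ω - u| ≤ δ})) atTop)
      (nhdsWithin 0 (Ioi 0)) ≤
      ((-(l * u - r * ∫ ω, (Real.exp (l * ξ 1 ω) - 1) ∂P) : ℝ) : EReal) ∧
    Filter.limsup
      (fun δ : ℝ => Filter.limsup
        (fun t : ℝ => ((1 / t : ℝ) : EReal) *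
          ENNReal.log (P {ω | |S t ω - u| ≤ δ})) atTop)
      (nhdsWithin 0 (Ioi 0)) ≤
      -(⨆ (l' : ℝ) (_ : (l' : EReal) < Λ),
        ((l' * u - r * ∫ ω, (Real.exp (l' * ξ 1 ω) - 1) ∂P : ℝ) : EReal)) :=
  compoundPoisson_upper_bound_pos_general P ξ σ r hr hξmeas hσmeas hξident hσexp hindep τ hτ S hS Λ
    hfin u l hl
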